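/- Let u : ℝ × ℝ → [0,1] be uniformly continuous, and let X : ℝ → ℝ be a function such that u(t, X(t) + x) → 1 as x → -∞ and u(t, X(t) + x) → 0 as x → +∞, uniformly in t ∈ ℝ. Then for every τ ≥ 0, sup { |X(t) - X(s)| : |t - s| ≤ τ } < +∞. -/

import Mathlib

/-!
Fix the level `ε = 1/4` of the front condition, with its width `A`. If `X t > X s + 2A`, then at
the point `y = X s + A` the profile `u t` is still `≥ 3/4` while `u s` is already `≤ 1/4`; uniform
continuity of `u` forbids this when `|t - s|` is small. Hence `X` oscillates by at most `2A` on
some scale `d > 0`, and chaining `⌈τ / d⌉` such steps bounds its oscillation on the scale `τ`.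
-/

open Metric

section Chaining

variable {E F : Type*} [NormedAddCommGroup E] [NormedSpace ℝ E] [PseudoMetricSpace F]
  {f : E → F} {d C : ℝ}

theorem dist_le_mul_of_norm_sub_le_mul
    (hloc : ∀ t s, ‖t - s‖ ≤ d → dist (f t) (f s) ≤ C) (n : ℕ) :
    ∀ t s, ‖t - s‖ ≤ n * d → dist (f t) (f s) ≤ n * C := by
  induction n with
  | zero =>
    intro t s hts
    simp only [Nat.cast_zero, zero_mul] at hts ⊢
    rw [sub_eq_zero.mp (norm_le_zero_iff.mp hts), dist_self]
  | succ n ih =>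
    intro t s hts
    have hn : (0 : ℝ) < n + 1 := by positivity
    -- split `[s, t]` at the point `r` with `t - r = (t - s) / (n + 1)`
    set r := s + ((n : ℝ) / (n + 1)) • (t - s)
    have htr : t - r = (1 / ((n : ℝ) + 1)) • (t - s) := by
      rw [show 1 / ((n : ℝ) + 1) = 1 - n / (n + 1) by field_simp; ring, sub_smul, one_smul]
      simp only [r]
      abel
    have hrs : r - s = ((n : ℝ) / (n + 1)) • (t - s) := by simp only [r]; abel
    push_cast at hts
    calc dist (f t) (f s) ≤ dist (f t) (f r) + dist (f r) (f s) := dist_triangle _ _ _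
      _ ≤ C + n * C := by
        gcongr
        · apply hloc
          rw [htr, norm_smul, Real.norm_of_nonneg (by positivity), div_mul_eq_mul_div, one_mul,
            div_le_iff₀ hn]
          linarith
        · apply ih
          rw [hrs, norm_smul, Real.norm_of_nonneg (by positivity), div_mul_eq_mul_div,
            div_le_iff₀ hn]
          nlinarith [Nat.cast_nonneg (α := ℝ) n]
      _ = (n + 1 : ℕ) * C := by push_cast; ring

theorem exists_dist_le_of_norm_sub_le (hd : 0 < d)
    (hloc : ∀ t s, ‖t - s‖ ≤ d → dist (f t) (f s) ≤ C) (τ : ℝ) :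
    ∃ B, ∀ t s, ‖t - s‖ ≤ τ → dist (f t) (f s) ≤ B := by
  refine ⟨⌈τ / d⌉₊ * C, fun t s hts => dist_le_mul_of_norm_sub_le_mul hloc _ t s ?_⟩
  calc ‖t - s‖ ≤ τ := hts
    _ ≤ ⌈τ / d⌉₊ * d := (div_le_iff₀ hd).mp (Nat.le_ceil _)

end Chaining

section Front

variable {u : ℝ × ℝ → ℝ} {X : ℝ → ℝ} {ε A : ℝ}

theorem sub_le_two_mul_of_front
    (hA : ∀ t x : ℝ, (x ≤ -A → 1 - ε ≤ u (t, X t + x)) ∧ (A ≤ x → u (t, X t + x) ≤ ε))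
    {t s : ℝ} (hu : |u (t, X s + A) - u (s, X s + A)| < 1 - 2 * ε) :
    X t - X s ≤ 2 * A := by
  by_contra! hX
  have hupper : 1 - ε ≤ u (t, X s + A) := by
    simpa using (hA t (X s + A - X t)).1 (by linarith)
  have hlower : u (s, X s + A) ≤ ε := by simpa using (hA s A).2 le_rfl
  linarith [le_abs_self (u (t, X s + A) - u (s, X s + A))]

theorem abs_sub_le_two_mul_of_front
    (hA : ∀ t x : ℝ, (x ≤ -A → 1 - ε ≤ u (t, X t + x)) ∧ (A ≤ x → u (t, X t + x) ≤ ε))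
    {δ : ℝ} (hδ : ∀ ⦃p q : ℝ × ℝ⦄, dist p q < δ → dist (u p) (u q) < 1 - 2 * ε)
    {t s : ℝ} (hts : |t - s| < δ) :
    |X t - X s| ≤ 2 * A := by
  have hdist : ∀ t s y : ℝ, |t - s| < δ → |u (t, y) - u (s, y)| < 1 - 2 * ε := fun t s y h =>
    hδ (p := (t, y)) (q := (s, y)) (by simpa [Prod.dist_eq, Real.dist_eq] using h)
  refine abs_le.mpr ⟨?_, sub_le_two_mul_of_front hA (hdist t s _ hts)⟩
  have := sub_le_two_mul_of_front hA (hdist s t _ (by rwa [abs_sub_comm]))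
  linarith

end Front

theorem stmt7_general (u : ℝ × ℝ → ℝ)
    (hcont : UniformContinuous u) (X : ℝ → ℝ)
    (hfront : ∀ ε > (0:ℝ), ∃ A, 0 ≤ A ∧
      ∀ t x : ℝ, (x ≤ -A → 1 - ε ≤ u (t, X t + x)) ∧ (A ≤ x → u (t, X t + x) ≤ ε)) :
    ∀ τ : ℝ, 0 ≤ τ → ∃ B : ℝ, ∀ t s : ℝ, |t - s| ≤ τ → |X t - X s| ≤ B := by
  intro τ _
  obtain ⟨A, -, hA⟩ := hfront (1 / 4) (by norm_num)
  obtain ⟨δ, hδ, hu⟩ := uniformContinuous_iff.mp hcont (1 - 2 * (1 / 4)) (by norm_num)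
  have hloc : ∀ t s : ℝ, ‖t - s‖ ≤ δ / 2 → dist (X t) (X s) ≤ 2 * A := fun t s h =>
    abs_sub_le_two_mul_of_front hA hu (show |t - s| < δ by rw [← Real.norm_eq_abs]; linarith)
  exact exists_dist_le_of_norm_sub_le (half_pos hδ) hloc τ

theorem stmt7 (u : ℝ × ℝ → ℝ) (hrange : ∀ p, u p ∈ Set.Icc (0:ℝ) 1)
    (hcont : UniformContinuous u) (X : ℝ → ℝ)
    (hfront : ∀ ε > (0:ℝ), ∃ A, 0 ≤ A ∧
      ∀ t x : ℝ, (x ≤ -A → 1 - ε ≤ u (t, X t + x)) ∧ (A ≤ x → u (t, X t + x) ≤ ε)) :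
    ∀ τ : ℝ, 0 ≤ τ → ∃ B : ℝ, ∀ t s : ℝ, |t - s| ≤ τ → |X t - X s| ≤ B :=
  stmt7_general u hcont X hfront
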